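/- Let f be a Schwartz function on ℝ⁶ = ℝ³_x × ℝ³_ξ, and let Op_f be its Weyl quantization with kernel Op_f(x,y) = ∫_{ℝ³} e^{-2πi(y-x)·ξ} f((x+y)/2, hξ) dξ where h = 2πħ. Then the Wick quantization equals the Weyl quantization of the Gaussian-mollified symbol: Õp_f = Op_{g_h * f}, where g_h(z) = (πħ)^{-3} e^{-|z|²/ħ}. -/

import Mathlib

open MeasureTheory Real SchwartzMap

noncomputable section

abbrev E3 := EuclideanSpace ℝ (Fin 3)

def coherentState (hb : ℝ) (z : E3 × E3) (y : E3) : ℂ :=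
  (((π * hb) ^ (-(3 : ℝ) / 4) : ℝ) : ℂ)
    * Complex.exp (((-‖y - z.1‖ ^ 2 / (2 * hb) : ℝ)) : ℂ)
    * Complex.exp (Complex.I * ((@inner ℝ _ _ y z.2 : ℝ) : ℂ) / (hb : ℂ))

def gaussianPS (hb : ℝ) (z : E3 × E3) : ℝ :=
  (π * hb) ^ (-(3 : ℝ)) * Real.exp (-(‖z.1‖ ^ 2 + ‖z.2‖ ^ 2) / hb)

/-- Weyl quantization kernel of a symbol `u`:
`Op_u(x,y) = ∫ e^{-2πi(y-x)·ξ} u((x+y)/2, hξ) dξ` with `h = 2π hb`. -/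
def weylKernel (hb : ℝ) (u : E3 × E3 → ℂ) (x y : E3) : ℂ :=
  ∫ ξ : E3, Complex.exp (-2 * π * Complex.I * ((@inner ℝ _ _ (y - x) ξ : ℝ) : ℂ))
    * u ((1 / 2 : ℝ) • (x + y), (2 * π * hb) • ξ)

/-!
The Wick quantization superposes the projectors `h⁻³ |ψ_z⟩⟨ψ_z|` with weights `f z`, and the
Weyl symbol of each projector is the Gaussian `g_h (· - z)`. Indeed, the `ξ`-integral in the Weyl
kernel of `g_h (· - z)` is the Fourier transform of a shifted Gaussian, and the parallelogram law
rewrites the Gaussians in `x - q` and `y - q` coming from `ψ_z x * conj (ψ_z y)` as one in the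
midpoint `(x + y) / 2 - q` times one in `x - y`. Superposing over `z` commutes with the Weyl
kernel by Fubini: the integrand is dominated by a translate of a Gaussian in `ξ` times `‖f‖`.
-/

open scoped RealInnerProductSpace

theorem norm_sub_sq_add_norm_sub_sq_eq_midpoint {F : Type*} [NormedAddCommGroup F]
    [InnerProductSpace ℝ F] (x y q : F) :
    ‖x - q‖ ^ 2 + ‖y - q‖ ^ 2 = 2 * ‖(1 / 2 : ℝ) • (x + y) - q‖ ^ 2 + ‖x - y‖ ^ 2 / 2 := by
  have hsum : (x - q) + (y - q) = (2 : ℝ) • ((1 / 2 : ℝ) • (x + y) - q) := by module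
  have hdiff : (x - q) - (y - q) = x - y := by abel
  have := parallelogram_law_with_norm ℝ (x - q) (y - q)
  rw [hsum, hdiff, norm_smul, mul_pow, Real.norm_two] at this
  linarith

theorem integrable_uncurry_of_norm_le_translate {G β E : Type*} [AddGroup G]
    [MeasurableSpace G] [MeasurableAdd G] [MeasurableNeg G] {μ : Measure G} [SFinite μ]
    [μ.IsAddRightInvariant] [MeasurableSpace β] {ν : Measure β} [SFinite ν]
    [NormedAddCommGroup E] {F : G → β → E}
    (hF : AEStronglyMeasurable (Function.uncurry F) (μ.prod ν)) {k : G → ℝ}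
    (hk : Integrable k μ) {g : β → ℝ} (hg : Integrable g ν) (τ : β → G)
    (hle : ∀ ξ w, ‖F ξ w‖ ≤ k (ξ - τ w) * g w) :
    Integrable (Function.uncurry F) (μ.prod ν) := by
  have hshift (w : β) : Integrable (fun ξ => k (ξ - τ w) * g w) μ :=
    (hk.comp_sub_right (τ w)).mul_const (g w)
  refine (integrable_prod_iff' hF).2 ⟨?_, ?_⟩
  · filter_upwards [hF.prodMk_right] with w hw
    exact (hshift w).mono' hw (ae_of_all _ fun ξ => hle ξ w)
  · refine (hg.const_mul (∫ ξ, k ξ ∂μ)).mono' hF.norm.prod_swap.integral_prod_right' ?_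
    refine ae_of_all _ fun w => ?_
    calc ‖∫ ξ, ‖F ξ w‖ ∂μ‖ = ∫ ξ, ‖F ξ w‖ ∂μ :=
          norm_of_nonneg (integral_nonneg fun _ => norm_nonneg _)
      _ ≤ ∫ ξ, k (ξ - τ w) * g w ∂μ :=
          integral_mono_of_nonneg (ae_of_all _ fun _ => norm_nonneg _) (hshift w)
            (ae_of_all _ fun ξ => hle ξ w)
      _ = (∫ ξ, k ξ ∂μ) * g w := by
          rw [integral_mul_const, integral_sub_right_eq_self k (τ w)]

open Complex in
theorem integral_cexp_inner_mul_gaussian_smul_sub {V : Type*} [NormedAddCommGroup V]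
    [InnerProductSpace ℝ V] [FiniteDimensional ℝ V] [MeasurableSpace V] [BorelSpace V]
    {hb : ℝ} (hhb : 0 < hb) (v p : V) :
    ∫ ξ : V, cexp (-2 * π * I * (⟪v, ξ⟫ : ℝ)) * (rexp (-‖(2 * π * hb) • ξ - p‖ ^ 2 / hb) : ℝ)
      = ((4 * π * hb) ^ (-(Module.finrank ℝ V : ℝ) / 2) : ℝ)
        * cexp ((-‖v‖ ^ 2 / (4 * hb) : ℝ) - I * (⟪v, p⟫ : ℝ) / hb) := by
  have hh : 0 < 2 * π * hb := by positivity
  have hshift (η : V) :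
      cexp (-2 * π * I * (⟪v, η + (2 * π * hb)⁻¹ • p⟫ : ℝ))
          * (rexp (-‖(2 * π * hb) • (η + (2 * π * hb)⁻¹ • p) - p‖ ^ 2 / hb) : ℝ)
        = cexp (-((4 * π ^ 2 * hb : ℝ) : ℂ) * (‖η‖ : ℂ) ^ 2 + (-2 * π * I) * (⟪v, η⟫ : ℝ))
          * cexp (-I * (⟪v, p⟫ : ℝ) / hb) := by
    rw [smul_add, smul_inv_smul₀ hh.ne', add_sub_cancel_right, norm_smul, Real.norm_eq_abs,
      abs_of_pos hh, inner_add_right, real_inner_smul_right, ofReal_exp, ← Complex.exp_add,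
      ← Complex.exp_add]
    congr 1
    push_cast
    field_simp
    ring
  have hconst : (π / ((4 * π ^ 2 * hb : ℝ) : ℂ)) ^ ((Module.finrank ℝ V : ℂ) / 2)
      = ((4 * π * hb) ^ (-(Module.finrank ℝ V : ℝ) / 2) : ℝ) := by
    rw [neg_div, Real.rpow_neg (by positivity), ← Real.inv_rpow (by positivity),
      ofReal_cpow (by positivity)]
    congr 1
    · push_cast
      field_simp
    · push_cast; ring
  rw [← integral_add_right_eq_self _ ((2 * π * hb)⁻¹ • p)]
  simp_rw [hshift]
  rw [integral_mul_const, GaussianFourier.integral_cexp_neg_mul_sq_norm_add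
    (by rw [ofReal_re]; positivity), hconst, mul_assoc, ← Complex.exp_add]
  congr 2
  push_cast
  field_simp
  ring_nf
  rw [I_sq]
  ring

open Complex in
theorem coherentState_mul_conj {hb : ℝ} (hhb : 0 < hb) (z : E3 × E3) (x y : E3) :
    coherentState hb z x * starRingEnd ℂ (coherentState hb z y)
      = ((π * hb) ^ (-(3 : ℝ) / 2) : ℝ)
        * cexp ((-(‖x - z.1‖ ^ 2 + ‖y - z.1‖ ^ 2) / (2 * hb) : ℝ)
          + I * (⟪x - y, z.2⟫ : ℝ) / hb) := by
  have hconst :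
      (π * hb) ^ (-(3 : ℝ) / 4) * (π * hb) ^ (-(3 : ℝ) / 4) = (π * hb) ^ (-(3 : ℝ) / 2) := by
    rw [← Real.rpow_add (by positivity)]; norm_num
  simp only [coherentState, map_mul, conj_ofReal, ← exp_conj, map_div₀, conj_I]
  rw [← hconst, inner_sub_left]
  push_cast
  rw [show ∀ a b c d e : ℂ, a * cexp b * cexp c * (a * cexp d * cexp e)
      = a * a * cexp (b + d + (c + e)) by intros; simp only [Complex.exp_add]; ring]
  congr 2
  ring

theorem gaussianPS_eq_mul (hb : ℝ) (w : E3 × E3) :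
    gaussianPS hb w = (π * hb) ^ (-(3 : ℝ)) * rexp (-‖w.1‖ ^ 2 / hb) * rexp (-‖w.2‖ ^ 2 / hb) := by
  rw [gaussianPS, mul_assoc, ← Real.exp_add, neg_add, add_div]

theorem gaussianPS_nonneg {hb : ℝ} (hhb : 0 ≤ hb) (w : E3 × E3) : 0 ≤ gaussianPS hb w := by
  unfold gaussianPS; positivity

theorem gaussianPS_le {hb : ℝ} (hhb : 0 ≤ hb) (w : E3 × E3) :
    gaussianPS hb w ≤ (π * hb) ^ (-(3 : ℝ)) * rexp (-‖w.2‖ ^ 2 / hb) := by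
  rw [gaussianPS_eq_mul]
  gcongr
  refine mul_le_of_le_one_right (by positivity) (Real.exp_le_one_iff.2 ?_)
  exact div_nonpos_of_nonpos_of_nonneg (neg_nonpos.2 (by positivity)) hhb

open Complex in
theorem weylKernel_gaussianPS_sub {hb : ℝ} (hhb : 0 < hb) (z : E3 × E3) (x y : E3) :
    weylKernel hb (fun w => (gaussianPS hb (w - z) : ℂ)) x y
      = ((2 * π * hb) ^ (-(3 : ℝ)) : ℝ)
        * (coherentState hb z x * starRingEnd ℂ (coherentState hb z y)) := by
  unfold weylKernel
  set m : E3 := (1 / 2 : ℝ) • (x + y)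
  have hsplit (ξ : E3) :
      cexp (-2 * π * I * (⟪y - x, ξ⟫ : ℝ)) * (gaussianPS hb ((m, (2 * π * hb) • ξ) - z) : ℂ)
        = ((π * hb) ^ (-(3 : ℝ)) * rexp (-‖m - z.1‖ ^ 2 / hb) : ℝ)
          * (cexp (-2 * π * I * (⟪y - x, ξ⟫ : ℝ))
            * (rexp (-‖(2 * π * hb) • ξ - z.2‖ ^ 2 / hb) : ℝ)) := by
    rw [gaussianPS_eq_mul, Prod.fst_sub, Prod.snd_sub]
    push_cast
    ring
  have hexp : ((-‖m - z.1‖ ^ 2 / hb : ℝ) : ℂ)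
        + ((-‖y - x‖ ^ 2 / (4 * hb) : ℝ) - I * (⟪y - x, z.2⟫ : ℝ) / hb)
      = ((-(‖x - z.1‖ ^ 2 + ‖y - z.1‖ ^ 2) / (2 * hb) : ℝ) + I * (⟪x - y, z.2⟫ : ℝ) / hb) := by
    rw [norm_sub_sq_add_norm_sub_sq_eq_midpoint, norm_sub_rev y x, ← neg_sub x y, inner_neg_left]
    push_cast
    field_simp
    ring
  have hconst : (π * hb) ^ (-(3 : ℝ)) * (4 * π * hb) ^ (-(3 : ℝ) / 2)
      = (2 * π * hb) ^ (-(3 : ℝ)) * (π * hb) ^ (-(3 : ℝ) / 2) := by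
    have hπh : 0 < π * hb := by positivity
    rw [mul_assoc 4, mul_assoc 2, Real.mul_rpow (by norm_num) hπh.le,
      Real.mul_rpow (by norm_num) hπh.le,
      show (4 : ℝ) = 2 ^ (2 : ℝ) by norm_num, ← Real.rpow_mul (by norm_num)]
    norm_num
    ring
  replace hconst := congrArg ((↑) : ℝ → ℂ) hconst
  push_cast at hconst
  simp_rw [hsplit]
  rw [integral_const_mul, integral_cexp_inner_mul_gaussian_smul_sub hhb, finrank_euclideanSpace_fin,
    Nat.cast_ofNat, coherentState_mul_conj hhb, ← hexp, Complex.exp_add]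
  push_cast
  linear_combination (cexp (-(‖m - z.1‖ : ℂ) ^ 2 / hb)
    * cexp (-(‖y - x‖ : ℂ) ^ 2 / (4 * hb) - I * (⟪y - x, z.2⟫ : ℝ) / hb)) * hconst

theorem weylKernel_integral {α : Type*} [MeasurableSpace α] {μ : Measure α} [SFinite μ]
    (hb : ℝ) (u : α → E3 × E3 → ℂ) (x y : E3)
    (hu : Integrable (Function.uncurry fun (ξ : E3) (a : α) =>
      Complex.exp (-2 * π * Complex.I * (⟪y - x, ξ⟫ : ℝ))
        * u a ((1 / 2 : ℝ) • (x + y), (2 * π * hb) • ξ)) (volume.prod μ)) :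
    weylKernel hb (fun w => ∫ a, u a w ∂μ) x y = ∫ a, weylKernel hb (u a) x y ∂μ := by
  unfold weylKernel
  simp_rw [← integral_const_mul]
  exact integral_integral_swap hu

theorem integrable_weylIntegrand_gaussianPS_sub_mul {hb : ℝ} (hhb : 0 < hb) {f : E3 × E3 → ℂ}
    (hf : Integrable f) (x y : E3) :
    Integrable (Function.uncurry fun (ξ : E3) (w' : E3 × E3) =>
      Complex.exp (-2 * π * Complex.I * (⟪y - x, ξ⟫ : ℝ))
        * ((gaussianPS hb (((1 / 2 : ℝ) • (x + y), (2 * π * hb) • ξ) - w') : ℂ) * f w'))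
      (volume.prod volume) := by
  have hh : 0 < 2 * π * hb := by positivity
  have hgauss : Integrable fun ξ : E3 => rexp (-(4 * π ^ 2 * hb) * ‖ξ‖ ^ 2) :=
    Integrable.of_integral_ne_zero (by
      rw [GaussianFourier.integral_rexp_neg_mul_sq_norm (by positivity)]; positivity)
  refine integrable_uncurry_of_norm_le_translate ?_ hgauss
    ((hf.norm.const_mul ((π * hb) ^ (-(3 : ℝ))))) (fun w' => (2 * π * hb)⁻¹ • w'.2) ?_
  · refine Continuous.aestronglyMeasurable ?_ |>.mul
      ((Continuous.aestronglyMeasurable ?_).mul hf.aestronglyMeasurable.comp_snd)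
    · fun_prop
    · unfold gaussianPS; fun_prop
  · intro ξ w'
    have hshift : (2 * π * hb) • ξ - w'.2 = (2 * π * hb) • (ξ - (2 * π * hb)⁻¹ • w'.2) := by
      rw [smul_sub, smul_inv_smul₀ hh.ne']
    have hphase : ‖Complex.exp (-2 * π * Complex.I * (⟪y - x, ξ⟫ : ℝ))‖ = 1 := by
      rw [Complex.norm_exp]; simp
    have hexp : ‖(2 * π * hb) • ξ - w'.2‖ ^ 2 / hb
        = 4 * π ^ 2 * hb * ‖ξ - (2 * π * hb)⁻¹ • w'.2‖ ^ 2 := by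
      rw [hshift, norm_smul, Real.norm_of_nonneg hh.le]
      field_simp
      ring
    rw [norm_mul, norm_mul, hphase, one_mul, Complex.norm_real,
      Real.norm_of_nonneg (gaussianPS_nonneg hhb.le _), ← mul_assoc, mul_comm (rexp _), neg_mul,
      ← hexp, ← neg_div]
    gcongr
    exact gaussianPS_le hhb.le _

theorem weylKernel_mul_const (hb : ℝ) (u : E3 × E3 → ℂ) (c : ℂ) (x y : E3) :
    weylKernel hb (fun w => u w * c) x y = weylKernel hb u x y * c := by
  simp only [weylKernel, ← mul_assoc, integral_mul_const]

/-- The Wick quantization is the Weyl quantization of the Gaussian-mollified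
symbol: the kernel `h⁻³ ∫ f(z) ψ_z(x) conj(ψ_z(y)) dz` of `Õp_f` equals the
Weyl kernel of `g_h * f`. -/
theorem wick_eq_weyl_of_mollified (hb : ℝ) (hhb : 0 < hb)
    (f : SchwartzMap (E3 × E3) ℂ) (x y : E3) :
    (((2 * π * hb) ^ (-(3 : ℝ)) : ℝ) : ℂ)
        * ∫ z : E3 × E3, f z * coherentState hb z x
            * (starRingEnd ℂ) (coherentState hb z y)
      = weylKernel hb (fun w => ∫ w' : E3 × E3,
          ((gaussianPS hb (w - w') : ℝ) : ℂ) * f w') x y := by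
  have hf : Integrable f := by
    -- instance search does not see through `volume = volume.prod volume`
    have : (volume : Measure (E3 × E3)).IsAddHaarMeasure := Measure.prod.instIsAddHaarMeasure _ _
    exact f.integrable
  rw [weylKernel_integral hb _ x y (integrable_weylIntegrand_gaussianPS_sub_mul hhb hf x y),
    ← integral_const_mul]
  refine integral_congr_ae (ae_of_all _ fun z => ?_)
  dsimp only
  rw [weylKernel_mul_const hb (fun w => (gaussianPS hb (w - z) : ℂ)), weylKernel_gaussianPS_sub hhb]
  ring
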